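/- arXiv:1507.00836 — 3 statements merged into one kernel-verified Lean document; each statement's English description precedes it below -/
import Mathlib

section
/- For a smooth complex-valued function u on an open set in ℝ³ and a smooth vector field A: ℝ³ → ℝ³, writing ∇_A u = ∇u - iAu, B = ∇×A, ρ = |u|², j_A = Re(-i ū ∇_A u), and 𝒟_A³ u = (∇_A u)₂ - i(∇_A u)₁, one has the pointwise identity |(∇_A u)₁|² + |(∇_A u)₂|² = |𝒟_A³ u|² + ρ B₃ + (∇' × j_A')₃, where (∇' × j')₃ = ∂₁ j₂ - ∂₂ j₁. -/
open MeasureTheory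

/-- Covariant gradient component: `(∇_A u)_k = ∂_k u - i A_k u`. -/
noncomputable def covGrad (u : (Fin 3 → ℝ) → ℂ) (A : (Fin 3 → ℝ) → Fin 3 → ℝ)
    (k : Fin 3) (x : Fin 3 → ℝ) : ℂ :=
  fderiv ℝ u x (Pi.single k 1) - Complex.I * (A x k : ℂ) * u x

/-- Supercurrent component: `j_A,k = Re(-i ū (∇_A u)_k)`. -/
noncomputable def superCurrent (u : (Fin 3 → ℝ) → ℂ) (A : (Fin 3 → ℝ) → Fin 3 → ℝ)
    (k : Fin 3) (x : Fin 3 → ℝ) : ℝ :=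
  (-Complex.I * (starRingEnd ℂ) (u x) * covGrad u A k x).re

/-- Bogomoln'yi identity:
`|(∇_A u)₁|² + |(∇_A u)₂|² = |𝒟_A³u|² + ρ B₃ + (∇'×j_A')₃`. -/
theorem stmt0 (u : (Fin 3 → ℝ) → ℂ) (A : (Fin 3 → ℝ) → Fin 3 → ℝ)
    (s : Set (Fin 3 → ℝ)) (hs : IsOpen s)
    (hu : ContDiffOn ℝ (⊤ : ℕ∞) u s) (hA : ContDiffOn ℝ (⊤ : ℕ∞) A s)
    (x : Fin 3 → ℝ) (hx : x ∈ s) :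
    Complex.normSq (covGrad u A 0 x) + Complex.normSq (covGrad u A 1 x)
      = Complex.normSq (covGrad u A 1 x - Complex.I * covGrad u A 0 x)
        + Complex.normSq (u x)
            * (fderiv ℝ (fun y => A y 1) x (Pi.single 0 1)
               - fderiv ℝ (fun y => A y 0) x (Pi.single 1 1))
        + (fderiv ℝ (superCurrent u A 1) x (Pi.single 0 1)
           - fderiv ℝ (superCurrent u A 0) x (Pi.single 1 1)) := by
  have hxs : s ∈ nhds x := hs.mem_nhds hx
  have hU : ContDiffAt ℝ (⊤ : ℕ∞) u x := hu.contDiffAt hxs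
  have hAx : ContDiffAt ℝ (⊤ : ℕ∞) A x := hA.contDiffAt hxs
  set du : (Fin 3 → ℝ) → ((Fin 3 → ℝ) →L[ℝ] ℂ) := fderiv ℝ u with hdu_def
  have hud : DifferentiableAt ℝ u x := hU.differentiableAt (by simp)
  have hdud : DifferentiableAt ℝ du x :=
    (hU.fderiv_right (m := (⊤ : ℕ∞)) (by simp)).differentiableAt (by simp)
  set d2 : (Fin 3 → ℝ) →L[ℝ] (Fin 3 → ℝ) →L[ℝ] ℂ := fderiv ℝ du x with hd2_def
  have hAd : DifferentiableAt ℝ A x := hAx.differentiableAt (by simp)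
  have hev : ∀ᶠ y in nhds x, HasFDerivAt u (du y) y := by
    filter_upwards [hs.eventually_mem hx] with y hy
    exact ((hu.contDiffAt (hs.mem_nhds hy)).differentiableAt (by simp)).hasFDerivAt
  have hsymm : ∀ v w, d2 v w = d2 w v :=
    second_derivative_symmetric_of_eventually hev hdud.hasFDerivAt
  have key : ∀ (k m : Fin 3),
      fderiv ℝ (superCurrent u A k) x (Pi.single m 1)
        = (-Complex.I * ((starRingEnd ℂ) (du x (Pi.single m 1)) * covGrad u A k x
            + (starRingEnd ℂ) (u x)
              * (d2 (Pi.single m 1) (Pi.single k 1)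
                 - Complex.I * (fderiv ℝ (fun y => A y k) x (Pi.single m 1)) * u x
                 - Complex.I * (A x k) * du x (Pi.single m 1)))).re := by
    intro k m
    have hAk : DifferentiableAt ℝ (fun y => A y k) x :=
      ((ContinuousLinearMap.proj (R := ℝ) (φ := fun _ : Fin 3 => ℝ) k).differentiableAt).comp x hAd
    -- derivative of y ↦ du y eₖ
    have h1' := (ContinuousLinearMap.apply ℝ ℂ ((Pi.single k 1 : Fin 3 → ℝ))).hasFDerivAt.comp x hdud.hasFDerivAt
    have h1 : HasFDerivAt (fun y => du y (Pi.single k 1))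
        ((ContinuousLinearMap.apply ℝ ℂ (Pi.single k 1)).comp d2) x := h1'
    -- derivative of y ↦ (A y k : ℂ)
    have h2 : HasFDerivAt (fun y => (A y k : ℂ))
        (Complex.ofRealCLM.comp (fderiv ℝ (fun y => A y k) x)) x :=
      Complex.ofRealCLM.hasFDerivAt.comp x hAk.hasFDerivAt
    -- derivative of covGrad k
    have h3 := h1.sub ((h2.const_mul Complex.I).mul hud.hasFDerivAt)
    have h4 : HasFDerivAt (fun y => (starRingEnd ℂ) (u y))
        (((starL' ℝ : ℂ ≃L[ℝ] ℂ) : ℂ →L[ℝ] ℂ) ∘L du x) x := hud.hasFDerivAt.star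
    have h5 := ((h4.const_mul (-Complex.I)).mul h3)
    have h6 := (Complex.reCLM.hasFDerivAt (x := (-Complex.I * (starRingEnd ℂ) (u x) * covGrad u A k x))).comp x h5
    have h7 : HasFDerivAt (superCurrent u A k) _ x := h6
    rw [h7.fderiv]
    simp only [ContinuousLinearMap.coe_comp', Function.comp_apply, ContinuousLinearMap.add_apply,
      ContinuousLinearMap.smul_apply, ContinuousLinearMap.sub_apply, smul_eq_mul,
      ContinuousLinearMap.apply_apply, Complex.ofRealCLM_apply, Complex.reCLM_apply,
      ContinuousLinearMap.coe_smul', Pi.smul_apply, starL'_apply]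
    simp only [covGrad, ContinuousLinearEquiv.coe_coe, starL'_apply, Complex.mul_re, Complex.mul_im,
      Complex.add_re, Complex.add_im, Complex.sub_re, Complex.sub_im, Complex.neg_re,
      Complex.neg_im, Complex.I_re, Complex.I_im, Complex.conj_re, Complex.conj_im,
      Complex.ofReal_re, Complex.ofReal_im, RCLike.star_def, Pi.sub_apply, Pi.mul_apply, ← hdu_def]
    ring
  rw [key 1 0, key 0 1, hsymm (Pi.single 0 1) (Pi.single 1 1)]
  simp only [covGrad, Complex.normSq_apply, Complex.mul_re, Complex.mul_im, Complex.sub_re,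
    Complex.sub_im, Complex.add_re, Complex.add_im, Complex.neg_re, Complex.neg_im,
    Complex.I_re, Complex.I_im, Complex.conj_re, Complex.conj_im, Complex.ofReal_re,
    Complex.ofReal_im]
  ring
end

section
/- Let χ ∈ L¹_loc(ℝⁿ) be (0,L)ⁿ-periodic with χ ≥ 0 and sup χ ≤ M, and let 0 < ℓ ≤ r. Define χ_ℓ(x) as the average of χ over the ball B_ℓ(x), and ψ(x) := average over B_r(x) of min{(2r/ℓ)ⁿ χ_{2r}, 1}·M where χ_{2r} is the average of χ/M over balls of radius 2r. Then ψ is (0,L)ⁿ-periodic and satisfies: (i) ψ ≥ χ_ℓ; (ii) sup ψ ≤ M; (iii) ∫_{(0,L)ⁿ} ψ ≤ (2r/ℓ)ⁿ ∫_{(0,L)ⁿ} χ. -/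
open MeasureTheory Set Metric

/-- Average of `f` over the ball of radius `s` centered at `x`. -/
noncomputable def ballAvg {n : ℕ} (f : EuclideanSpace ℝ (Fin n) → ℝ) (s : ℝ)
    (x : EuclideanSpace ℝ (Fin n)) : ℝ :=
  ⨍ y in ball x s, f y

/-- The concentration test function built from `χ`. -/
noncomputable def psiFn {n : ℕ} (χ : EuclideanSpace ℝ (Fin n) → ℝ) (ℓ r M : ℝ)
    (x : EuclideanSpace ℝ (Fin n)) : ℝ :=
  ⨍ y in ball x r, (min ((2 * r / ℓ) ^ n * ballAvg (fun z => χ z / M) (2 * r) y) 1) * M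

/-!
For `y ∈ B_r(x)` the ball `B_ℓ(x)` lies in `B_{2r}(y)`, whose volume is `(2r/ℓ)ⁿ` times larger,
so `χ_ℓ(x) ≤ (2r/ℓ)ⁿ χ_{2r}(y)` because `χ ≥ 0`. Together with `χ_ℓ(x) ≤ M` this puts `χ_ℓ(x)`
below `W := min ((2r/ℓ)ⁿ χ_{2r}, M)` on all of `B_r(x)`, hence below `ψ`, the `r`-average of `W`.
Averaging over balls preserves the integral of a bounded periodic function over a period cell
(Fubini, and invariance of cell integrals under translation), so
`∫ ψ = ∫ W ≤ (2r/ℓ)ⁿ ∫ χ_{2r} = (2r/ℓ)ⁿ ∫ χ`.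
-/

lemma integrableOn_of_forall_mem_Icc {α : Type*} [MeasurableSpace α] {μ : Measure α}
    {f : α → ℝ} {s : Set α} {a b : ℝ} (hs : μ s ≠ ⊤) (hf : AEStronglyMeasurable f μ)
    (hfab : ∀ y, f y ∈ Icc a b) : IntegrableOn f s μ :=
  Measure.integrableOn_of_bounded hs hf <| .of_forall fun y =>
    (Real.norm_eq_abs _).trans_le (abs_le_max_abs_abs (hfab y).1 (hfab y).2)

lemma MeasureTheory.IsAddFundamentalDomain.setIntegral_comp_add_right {G F : Type*}
    [AddCommGroup G] [MeasurableSpace G] [MeasurableAdd G] {μ : Measure G} [μ.IsAddLeftInvariant]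
    [NormedAddCommGroup F] [NormedSpace ℝ F] {Λ : AddSubgroup G}
    [Countable Λ] {D : Set G} (hD : IsAddFundamentalDomain Λ D μ) {f : G → F}
    (hf : ∀ v ∈ Λ, Function.Periodic f v) (z : G) :
    ∫ x in D, f (x + z) ∂μ = ∫ x in D, f x ∂μ := by
  have hDz : IsAddFundamentalDomain Λ ((· + z) ⁻¹' D) μ :=
    hD.preimage_of_equiv (measurePreserving_add_right μ z).quasiMeasurePreserving
      Function.bijective_id fun g x => add_assoc (g : G) x z
  calc ∫ x in D, f (x + z) ∂μ = ∫ x in (· + z) ⁻¹' D, f (x + z) ∂μ :=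
        hD.setIntegral_eq hDz fun g x => by
          change f ((g : G) + x + z) = f (x + z)
          rw [add_assoc, add_comm (g : G), hf g g.2]
    _ = ∫ x in D, f x ∂μ := (measurePreserving_add_right μ z).setIntegral_preimage_emb
        (MeasurableEquiv.addRight z).measurableEmbedding f D

section

variable {n : ℕ}

local notation "E" => EuclideanSpace ℝ (Fin n)

lemma setIntegral_ball_eq_setIntegral_ball_zero (f : E → ℝ) (s : ℝ) (x : E) :
    ∫ y in ball x s, f y = ∫ y in ball 0 s, f (x + y) := by
  have hpre : (x + ·) ⁻¹' ball x s = ball 0 s := by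
    ext y; simp
  rw [← hpre, (measurePreserving_add_left volume x).setIntegral_preimage_emb
    (MeasurableEquiv.addLeft x).measurableEmbedding]

lemma ballAvg_eq_inv_mul_setIntegral_ball_zero (f : E → ℝ) (s : ℝ) (x : E) :
    ballAvg f s x = (volume.real (ball (0 : E) s))⁻¹ * ∫ y in ball 0 s, f (x + y) := by
  rw [ballAvg, setAverage_eq, smul_eq_mul, measureReal_def, Measure.addHaar_ball_center,
    setIntegral_ball_eq_setIntegral_ball_zero, measureReal_def]

lemma Function.Periodic.ballAvg {f : E → ℝ} {v : E} (hf : Function.Periodic f v) (s : ℝ) :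
    Function.Periodic (_root_.ballAvg f s) v := fun x => by
  have hf' : ∀ y, f (y + v) = f y := hf
  simp only [ballAvg_eq_inv_mul_setIntegral_ball_zero, add_right_comm x v, hf']

lemma ballAvg_const {s : ℝ} (hs : 0 < s) (c : ℝ) (x : E) : ballAvg (fun _ => c) s x = c :=
  setAverage_const (measure_ball_pos _ _ hs).ne' measure_ball_lt_top.ne c

lemma ballAvg_div_const (f : E → ℝ) (c s : ℝ) (x : E) :
    ballAvg (fun y => f y / c) s x = ballAvg f s x / c := by
  unfold ballAvg
  simp only [setAverage_eq, smul_eq_mul, integral_div, mul_div_assoc]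

lemma ballAvg_mono {f g : E → ℝ} {s : ℝ} {x : E} (hf : IntegrableOn f (ball x s))
    (hg : IntegrableOn g (ball x s)) (h : ∀ y ∈ ball x s, f y ≤ g y) :
    ballAvg f s x ≤ ballAvg g s x := by
  unfold ballAvg
  simp only [setAverage_eq, smul_eq_mul]
  exact mul_le_mul_of_nonneg_left (setIntegral_mono_on hf hg measurableSet_ball h) (by positivity)

lemma ballAvg_mem_Icc {f : E → ℝ} {s a b : ℝ} (hs : 0 < s)
    (hf : AEStronglyMeasurable f volume) (hfab : ∀ y, f y ∈ Icc a b) (x : E) :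
    ballAvg f s x ∈ Icc a b :=
  (convex_Icc a b).set_average_mem isClosed_Icc (measure_ball_pos _ _ hs).ne'
    measure_ball_lt_top.ne (.of_forall hfab)
    (integrableOn_of_forall_mem_Icc measure_ball_lt_top.ne hf hfab)

lemma MeasureTheory.AEStronglyMeasurable.comp_add_prod {f : E → ℝ}
    (hf : AEStronglyMeasurable f volume) :
    AEStronglyMeasurable (fun p : E × E => f (p.1 + p.2)) (volume.prod volume) :=
  hf.comp_snd.comp_quasiMeasurePreserving
    (measurePreserving_prod_add volume volume).quasiMeasurePreserving

lemma aestronglyMeasurable_ballAvg {f : E → ℝ} (hf : AEStronglyMeasurable f volume) (s : ℝ) :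
    AEStronglyMeasurable (ballAvg f s) volume := by
  simp_rw [funext (ballAvg_eq_inv_mul_setIntegral_ball_zero f s)]
  refine AEStronglyMeasurable.const_mul ?_ _
  exact (hf.comp_add_prod.mono_measure
    (Measure.prod_mono le_rfl (Measure.restrict_le_self (s := ball 0 s)))).integral_prod_right'

lemma ballAvg_le_mul_ballAvg_of_subset {f : E → ℝ} {a b : ℝ} {x y : E} (hf : ∀ z, 0 ≤ f z)
    (hfi : IntegrableOn f (ball y b)) (ha : 0 < a) (hab : ball x a ⊆ ball y b) :
    ballAvg f a x ≤ (b / a) ^ n * ballAvg f b y := by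
  have hb : 0 < b := by
    obtain ⟨z, hz⟩ := (nonempty_ball.2 ha).mono hab
    exact pos_of_mem_ball hz
  have hvol : volume.real (ball y b) = (b / a) ^ n * volume.real (ball x a) := by
    simp only [measureReal_def, Measure.addHaar_ball_of_pos _ _ ha,
      Measure.addHaar_ball_of_pos _ _ hb, finrank_euclideanSpace_fin, ENNReal.toReal_mul,
      ENNReal.toReal_ofReal (pow_nonneg ha.le n),
      ENNReal.toReal_ofReal (pow_nonneg hb.le n)]
    rw [div_pow]; field_simp
  have hpos : 0 < volume.real (ball x a) :=
    ENNReal.toReal_pos (measure_ball_pos _ x ha).ne' measure_ball_lt_top.ne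
  rw [ballAvg, ballAvg, setAverage_eq, setAverage_eq, smul_eq_mul, smul_eq_mul, hvol, mul_inv,
    ← mul_assoc, ← mul_assoc, mul_inv_cancel₀ (by positivity), one_mul]
  exact mul_le_mul_of_nonneg_left (setIntegral_mono_set hfi (.of_forall hf) hab.eventuallyLE)
    (by positivity)

lemma setIntegral_ballAvg_of_isAddFundamentalDomain {Λ : AddSubgroup E} [Countable Λ] {D : Set E}
    (hD : IsAddFundamentalDomain Λ D) (hDfin : volume D ≠ ⊤) {f : E → ℝ} {a b : ℝ}
    (hf : AEStronglyMeasurable f volume) (hfab : ∀ y, f y ∈ Icc a b)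
    (hper : ∀ v ∈ Λ, Function.Periodic f v) {s : ℝ} (hs : 0 < s) :
    ∫ x in D, ballAvg f s x = ∫ x in D, f x := by
  have : IsFiniteMeasure (volume.restrict D) := ⟨by simpa using hDfin.lt_top⟩
  have : IsFiniteMeasure (volume.restrict (ball (0 : E) s)) :=
    ⟨by simpa using measure_ball_lt_top⟩
  have hint : Integrable (fun p : E × E => f (p.1 + p.2))
      ((volume.restrict D).prod (volume.restrict (ball 0 s))) :=
    (integrable_const (max |a| |b|)).mono'
      (hf.comp_add_prod.mono_measure (Measure.prod_mono Measure.restrict_le_self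
        Measure.restrict_le_self))
      (.of_forall fun p => abs_le_max_abs_abs (hfab _).1 (hfab _).2)
  have hc : volume.real (ball (0 : E) s) ≠ 0 :=
    (ENNReal.toReal_pos (measure_ball_pos _ _ hs).ne' measure_ball_lt_top.ne).ne'
  calc ∫ x in D, ballAvg f s x
      = ∫ x in D, (volume.real (ball (0 : E) s))⁻¹ * ∫ y in ball 0 s, f (x + y) := by
        simp only [ballAvg_eq_inv_mul_setIntegral_ball_zero]
    _ = (volume.real (ball (0 : E) s))⁻¹ * ∫ y in ball 0 s, ∫ x in D, f (x + y) := by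
        rw [integral_const_mul, integral_integral_swap hint]
    _ = (volume.real (ball (0 : E) s))⁻¹ * ∫ y in ball (0 : E) s, ∫ x in D, f x := by
        simp only [hD.setIntegral_comp_add_right hper]
    _ = ∫ x in D, f x := by
        rw [setIntegral_const, smul_eq_mul, ← mul_assoc, inv_mul_cancel₀ hc, one_mul]

section Cell

variable {L : ℝ}

noncomputable def periodBasis (hL : L ≠ 0) : Module.Basis (Fin n) ℝ E :=
  (EuclideanSpace.basisFun (Fin n) ℝ).toBasis.unitsSMul fun _ => Units.mk0 L hL

lemma periodBasis_repr (hL : L ≠ 0) (x : E) (i : Fin n) :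
    (periodBasis hL).repr x i = L⁻¹ * x i := by
  simp [periodBasis, Module.Basis.repr_unitsSMul, Units.smul_def]

lemma periodic_of_mem_span_periodBasis (hL : L ≠ 0) {f : E → ℝ}
    (hf : ∀ (k : Fin n → ℤ) (x : E),
      f (x + (EuclideanSpace.equiv (Fin n) ℝ).symm (fun i => L * (k i : ℝ))) = f x)
    {v : E} (hv : v ∈ Submodule.span ℤ (range (periodBasis hL))) : Function.Periodic f v := by
  rw [Module.Basis.mem_span_iff_repr_mem] at hv
  choose k hk using hv
  intro x
  convert hf k x using 3
  ext i
  have hki := hk i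
  rw [periodBasis_repr, algebraMap_int_eq, eq_intCast] at hki
  simp [hki, hL]

lemma fundamentalDomain_periodBasis (hL : 0 < L) :
    ZSpan.fundamentalDomain (periodBasis hL.ne') = {x : E | ∀ i, x i ∈ Ico 0 L} := by
  ext x
  simp only [ZSpan.mem_fundamentalDomain, periodBasis_repr, mem_Ico, mem_ofPred_eq]
  refine forall_congr' fun i => ?_
  rw [inv_mul_eq_div, div_lt_one hL, le_div_iff₀ hL, zero_mul]

lemma cell_Ioo_ae_eq_Ico :
    {x : E | ∀ i, x i ∈ Ioo 0 L} =ᵐ[volume] {x : E | ∀ i, x i ∈ Ico 0 L} := by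
  have hpi (I : Set ℝ) : {x : E | ∀ i, x i ∈ I} = WithLp.ofLp ⁻¹' univ.pi fun _ => I := by
    ext x; simp
  rw [hpi, hpi]
  exact (PiLp.volume_preserving_ofLp (Fin n)).quasiMeasurePreserving.preimage_ae_eq
    (Measure.univ_pi_Ioo_ae_eq_Icc.trans Measure.univ_pi_Ico_ae_eq_Icc.symm)

lemma isBounded_cell (hL : 0 < L) : Bornology.IsBounded {x : E | ∀ i, x i ∈ Ioo 0 L} := by
  refine (ZSpan.fundamentalDomain_isBounded (periodBasis (n := n) hL.ne')).subset ?_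
  rw [fundamentalDomain_periodBasis hL]
  exact fun x hx i => Ioo_subset_Ico_self (hx i)

lemma setIntegral_cell_ballAvg (hL : 0 < L) {f : E → ℝ} {a b : ℝ}
    (hf : AEStronglyMeasurable f volume) (hfab : ∀ y, f y ∈ Icc a b)
    (hper : ∀ (k : Fin n → ℤ) (x : E),
      f (x + (EuclideanSpace.equiv (Fin n) ℝ).symm (fun i => L * (k i : ℝ))) = f x)
    {s : ℝ} (hs : 0 < s) :
    ∫ x in {x : E | ∀ i, x i ∈ Ioo 0 L}, ballAvg f s x
      = ∫ x in {x : E | ∀ i, x i ∈ Ioo 0 L}, f x := by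
  simp only [setIntegral_congr_set cell_Ioo_ae_eq_Ico, ← fundamentalDomain_periodBasis hL]
  have : Countable (Submodule.span ℤ (range (periodBasis (n := n) hL.ne'))).toAddSubgroup :=
    inferInstanceAs (Countable (Submodule.span ℤ (range (periodBasis (n := n) hL.ne'))))
  exact setIntegral_ballAvg_of_isAddFundamentalDomain (ZSpan.isAddFundamentalDomain' _ _)
    (ZSpan.fundamentalDomain_isBounded _).measure_lt_top.ne hf hfab
    (fun v hv => periodic_of_mem_span_periodBasis hL.ne' hper hv) hs

end Cell

noncomputable def truncBallAvg (f : E → ℝ) (c s M : ℝ) (y : E) : ℝ :=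
  min (c * ballAvg f s y) M

lemma psiFn_eq_ballAvg_truncBallAvg (χ : E → ℝ) (ℓ r : ℝ) {M : ℝ} (hM : 0 < M) :
    psiFn χ ℓ r M = ballAvg (truncBallAvg χ ((2 * r / ℓ) ^ n) (2 * r) M) r := by
  funext x
  refine setAverage_congr_fun measurableSet_ball (.of_forall fun y _ => ?_)
  rw [truncBallAvg, ballAvg_div_const, min_mul_of_nonneg _ _ hM.le, one_mul, ← mul_div_assoc,
    div_mul_cancel₀ _ hM.ne']

variable {f : EuclideanSpace ℝ (Fin n) → ℝ} {c s M : ℝ}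

lemma truncBallAvg_mem_Icc (hf : AEStronglyMeasurable f volume) (hfM : ∀ y, f y ∈ Icc 0 M)
    (hc : 0 ≤ c) (hs : 0 < s) (y : E) : truncBallAvg f c s M y ∈ Icc 0 M :=
  ⟨le_min (mul_nonneg hc (ballAvg_mem_Icc hs hf hfM y).1) ((hfM 0).1.trans (hfM 0).2),
    min_le_right _ _⟩

lemma aestronglyMeasurable_truncBallAvg (hf : AEStronglyMeasurable f volume) :
    AEStronglyMeasurable (truncBallAvg f c s M) volume :=
  ((aestronglyMeasurable_ballAvg hf s).const_mul c).inf aestronglyMeasurable_const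

lemma Function.Periodic.truncBallAvg {v : E} (hf : Function.Periodic f v) :
    Function.Periodic (_root_.truncBallAvg f c s M) v := fun y => by
  rw [_root_.truncBallAvg, _root_.truncBallAvg, hf.ballAvg s y]

lemma ballAvg_le_ballAvg_truncBallAvg {ℓ r : ℝ} (hℓ : 0 < ℓ) (hℓr : ℓ ≤ r)
    (hf : AEStronglyMeasurable f volume) (hfM : ∀ y, f y ∈ Icc 0 M) (x : E) :
    ballAvg f ℓ x ≤ ballAvg (truncBallAvg f ((2 * r / ℓ) ^ n) (2 * r) M) r x := by
  have hr : 0 < r := hℓ.trans_le hℓr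
  have hinner : ∀ y ∈ ball x r,
      ballAvg f ℓ x ≤ truncBallAvg f ((2 * r / ℓ) ^ n) (2 * r) M y := by
    intro y hy
    have hsub : ball x ℓ ⊆ ball y (2 * r) := by
      refine ball_subset_ball' ?_
      linarith [mem_ball'.1 hy]
    exact le_min (ballAvg_le_mul_ballAvg_of_subset (fun z => (hfM z).1)
      (integrableOn_of_forall_mem_Icc measure_ball_lt_top.ne hf hfM) hℓ hsub)
      (ballAvg_mem_Icc hℓ hf hfM x).2
  calc ballAvg f ℓ x = ballAvg (fun _ => ballAvg f ℓ x) r x := (ballAvg_const hr _ x).symm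
    _ ≤ _ := ballAvg_mono (integrableOn_const measure_ball_lt_top.ne)
      (integrableOn_of_forall_mem_Icc measure_ball_lt_top.ne
        (aestronglyMeasurable_truncBallAvg hf)
        (truncBallAvg_mem_Icc hf hfM (by positivity) (by positivity))) hinner

lemma setIntegral_cell_ballAvg_truncBallAvg_le {L r : ℝ} (hL : 0 < L) (hc : 0 ≤ c) (hs : 0 < s)
    (hr : 0 < r) (hf : AEStronglyMeasurable f volume) (hfM : ∀ y, f y ∈ Icc 0 M)
    (hper : ∀ (k : Fin n → ℤ) (x : E),
      f (x + (EuclideanSpace.equiv (Fin n) ℝ).symm (fun i => L * (k i : ℝ))) = f x) :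
    ∫ x in {x : E | ∀ i, x i ∈ Ioo 0 L}, ballAvg (truncBallAvg f c s M) r x
      ≤ c * ∫ x in {x : E | ∀ i, x i ∈ Ioo 0 L}, f x := by
  have hcell := (isBounded_cell (n := n) hL).measure_lt_top (μ := volume) |>.ne
  have hW := truncBallAvg_mem_Icc hf hfM hc hs
  calc ∫ x in {x : E | ∀ i, x i ∈ Ioo 0 L}, ballAvg (truncBallAvg f c s M) r x
      = ∫ x in {x : E | ∀ i, x i ∈ Ioo 0 L}, truncBallAvg f c s M x :=
        setIntegral_cell_ballAvg hL (aestronglyMeasurable_truncBallAvg hf) hW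
          (fun k => Function.Periodic.truncBallAvg (hper k)) hr
    _ ≤ ∫ x in {x : E | ∀ i, x i ∈ Ioo 0 L}, c * ballAvg f s x :=
        setIntegral_mono
          (integrableOn_of_forall_mem_Icc hcell (aestronglyMeasurable_truncBallAvg hf) hW)
          ((integrableOn_of_forall_mem_Icc hcell (aestronglyMeasurable_ballAvg hf s)
            (ballAvg_mem_Icc hs hf hfM)).const_mul c)
          fun _ => min_le_left _ _
    _ = c * ∫ x in {x : E | ∀ i, x i ∈ Ioo 0 L}, f x := by
        rw [integral_const_mul, setIntegral_cell_ballAvg hL hf hfM hper hs]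

end

/-- Truncation-mollification lemma: periodicity, `ψ ≥ χ_ℓ`, `sup ψ ≤ M`, and the
`L¹` bound on the periodicity cell. -/
theorem stmt2 (n : ℕ) (L ℓ r M : ℝ) (hL : 0 < L) (hℓ : 0 < ℓ) (hℓr : ℓ ≤ r) (hM : 0 < M)
    (χ : EuclideanSpace ℝ (Fin n) → ℝ)
    (hloc : LocallyIntegrable χ volume)
    (hnn : ∀ x, 0 ≤ χ x) (hbd : ∀ x, χ x ≤ M)
    (hper : ∀ (k : Fin n → ℤ) (x : EuclideanSpace ℝ (Fin n)),
      χ (x + (EuclideanSpace.equiv (Fin n) ℝ).symm (fun i => L * (k i : ℝ))) = χ x) :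
    (∀ (k : Fin n → ℤ) (x : EuclideanSpace ℝ (Fin n)),
      psiFn χ ℓ r M (x + (EuclideanSpace.equiv (Fin n) ℝ).symm (fun i => L * (k i : ℝ)))
        = psiFn χ ℓ r M x) ∧
    (∀ x, ballAvg χ ℓ x ≤ psiFn χ ℓ r M x) ∧
    (∀ x, psiFn χ ℓ r M x ≤ M) ∧
    (∫ x in {x : EuclideanSpace ℝ (Fin n) | ∀ i, x i ∈ Ioo (0:ℝ) L}, psiFn χ ℓ r M x)
      ≤ (2 * r / ℓ) ^ n *
        ∫ x in {x : EuclideanSpace ℝ (Fin n) | ∀ i, x i ∈ Ioo (0:ℝ) L}, χ x := by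
  have hr : 0 < r := hℓ.trans_le hℓr
  have hχ : ∀ x, χ x ∈ Icc 0 M := fun x => ⟨hnn x, hbd x⟩
  have hχm := hloc.aestronglyMeasurable
  have hW := truncBallAvg_mem_Icc (c := (2 * r / ℓ) ^ n) hχm hχ (by positivity)
    (by positivity : 0 < 2 * r)
  rw [psiFn_eq_ballAvg_truncBallAvg χ ℓ r hM]
  exact ⟨fun k => (Function.Periodic.truncBallAvg (hper k)).ballAvg r,
    ballAvg_le_ballAvg_truncBallAvg hℓ hℓr hχm hχ,
    fun x => (ballAvg_mem_Icc hr (aestronglyMeasurable_truncBallAvg hχm) hW x).2,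
    setIntegral_cell_ballAvg_truncBallAvg_le hL (by positivity) (by positivity) hr hχm hχ hper⟩
end

section
/- Let R₀ = (0,a) × (0,b) be a rectangle with a/3 ≤ b ≤ 3a and let B* > 0 satisfy a b B* ∈ 2πℤ. Then for every k ∈ ℕ there exist 2^k pairwise disjoint axis-parallel rectangles R_{k,1}, …, R_{k,2^k} (possibly empty), each with aspect ratio at most 3 and area A_{k,i} satisfying A_{k,i} B* ∈ 2πℤ, such that each R_{k,i} is the union (up to null sets) of two rectangles of the next generation, R₀ = ∪_i R_{k,i} up to null sets, and |A_{k,i} - 2^{-k} a b| ≤ 4π/B*. -/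
open MeasureTheory Set

/-- The open axis-parallel rectangle with lower-left corner `c` and side lengths `s`. -/
def rect (c s : ℝ × ℝ) : Set (ℝ × ℝ) :=
  Ioo c.1 (c.1 + s.1) ×ˢ Ioo c.2 (c.2 + s.2)

/-!
Let a good rectangle have sides `a ≤ b` and flux `a b B = 2π m`. Cutting the longer side at
`t = (2π / (B a)) ⌊m / 2⌋` produces pieces of flux `2π ⌊m/2⌋` and `2π ⌈m/2⌉`: both are quantized
and each has area within `π / B` of half the parent's. For `m ≥ 2` one has `m ≤ 3 ⌊m/2⌋`, which
keeps the aspect ratio of both pieces at most 3; for `m ≤ 1` the rectangle is kept and paired with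
an empty one. Along the binary tree the area error `e_k` of generation `k` obeys
`e_{k+1} ≤ e_k / 2 + π / B`, so it stays below `2π / B`; disjointness, and covering up to the null
cut segments, pass from parents to children.
-/

open Real

noncomputable def cutLength (B a b : ℝ) : ℝ :=
  2 * π / (B * a) * ⌊B * a * b / (4 * π)⌋

section cutLength

variable {B a b : ℝ} {m : ℤ}

lemma mul_cutLength_mul (hB : 0 < B) (ha : 0 < a) (hm : a * b * B = 2 * π * m) :
    a * cutLength B a b * B = 2 * π * (m / 2 : ℤ) := by
  have hfloor : ⌊B * a * b / (4 * π)⌋ = m / 2 := by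
    rw [show B * a * b / (4 * π) = (m : ℝ) / (2 : ℕ) by
      rw [show B * a * b = a * b * B by ring, hm]; field_simp; ring,
      Int.floor_div_natCast, Int.floor_intCast, Nat.cast_ofNat]
  rw [cutLength, hfloor]
  field_simp

lemma abs_mul_cutLength_sub_le (hB : 0 < B) (ha : 0 ≤ a) (hm : a * b * B = 2 * π * m) :
    |a * cutLength B a b - a * b / 2| ≤ π / B := by
  rcases ha.eq_or_lt with rfl | ha
  · simp [pi_pos.le, hB.le, div_nonneg]
  have hq := mul_cutLength_mul hB ha hm
  have hdev : |2 * ((m / 2 : ℤ) : ℝ) - m| ≤ 1 := by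
    rw [abs_le]; constructor <;> norm_cast <;> omega
  calc |a * cutLength B a b - a * b / 2|
      = |π * (2 * ((m / 2 : ℤ) : ℝ) - m) / B| := by
        congr 1
        field_simp
        linear_combination 2 * hq - hm
    _ = π * |2 * ((m / 2 : ℤ) : ℝ) - m| / B := by
        rw [abs_div, abs_mul, abs_of_pos pi_pos, abs_of_pos hB]
    _ ≤ π / B := by
        gcongr
        simpa using mul_le_mul_of_nonneg_left hdev pi_pos.le

lemma cutLength_bounds (hB : 0 < B) (ha : 0 < a) (hab : a ≤ b) (hm : a * b * B = 2 * π * m)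
    (ht : cutLength B a b ≠ 0) :
    0 ≤ cutLength B a b ∧ cutLength B a b ≤ b ∧
      a ≤ 3 * cutLength B a b ∧ a ≤ 3 * (b - cutLength B a b) := by
  have hq := mul_cutLength_mul hB ha hm
  set t := cutLength B a b
  set q : ℤ := m / 2
  have hm0 : 0 ≤ m := by
    have : (0 : ℝ) ≤ 2 * π * m := hm ▸ by have := ha.trans_le hab; positivity
    exact_mod_cast nonneg_of_mul_nonneg_right this (by positivity : (0:ℝ) < 2 * π)
  have hq0 : q ≠ 0 := by
    rintro h
    apply ht
    simpa [h, ha.ne', hB.ne'] using hq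
  have h1 : (0 : ℝ) ≤ q := by exact_mod_cast (by omega : 0 ≤ q)
  have h2 : (q : ℝ) ≤ m := by exact_mod_cast (by omega : q ≤ m)
  have h3 : (m : ℝ) ≤ 3 * q := by exact_mod_cast (by omega : m ≤ 3 * q)
  have h4 : (m : ℝ) ≤ 3 * (m - q) := by exact_mod_cast (by omega : m ≤ 3 * (m - q))
  have haB : 0 < a * B := by positivity
  have hπ := pi_pos
  refine ⟨?_, ?_, ?_, ?_⟩
  all_goals
    refine le_of_mul_le_mul_right ?_ haB
    nlinarith

end cutLength

@[simp]
lemma rect_zero (c : ℝ × ℝ) : rect c 0 = ∅ := by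
  simp [rect]

lemma rect_swap (c s : ℝ × ℝ) : rect c.swap s.swap = Prod.swap ⁻¹' rect c s := by
  simp [rect, preimage_swap_prod]

lemma rect_subset_rect {c s c' s' : ℝ × ℝ} (h₁ : c'.1 ≤ c.1) (h₂ : c.1 + s.1 ≤ c'.1 + s'.1)
    (h₃ : c'.2 ≤ c.2) (h₄ : c.2 + s.2 ≤ c'.2 + s'.2) : rect c s ⊆ rect c' s' :=
  prod_mono (Ioo_subset_Ioo h₁ h₂) (Ioo_subset_Ioo h₃ h₄)

lemma disjoint_rect_lower_upper (c : ℝ × ℝ) (w t u : ℝ) :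
    Disjoint (rect c (w, t)) (rect (c.1, c.2 + t) (w, u)) :=
  Disjoint.set_prod_right (Ico_disjoint_Ico_same.mono Ioo_subset_Ico_self Ioo_subset_Ico_self) _ _

lemma rect_lower_subset (c : ℝ × ℝ) {w t b : ℝ} (htb : t ≤ b) :
    rect c (w, t) ⊆ rect c (w, b) :=
  rect_subset_rect le_rfl le_rfl le_rfl (by simpa using htb)

lemma rect_upper_subset (c : ℝ × ℝ) {w t b : ℝ} (ht : 0 ≤ t) :
    rect (c.1, c.2 + t) (w, b - t) ⊆ rect c (w, b) :=
  rect_subset_rect le_rfl le_rfl (by simpa using ht) (by simp)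

lemma rect_ae_eq_lower_union_upper (c : ℝ × ℝ) {w t b : ℝ} (ht : 0 ≤ t) (htb : t ≤ b) :
    rect c (w, b) =ᵐ[volume] (rect c (w, t) ∪ rect (c.1, c.2 + t) (w, b - t) : Set (ℝ × ℝ)) := by
  have hgap : Ioo c.2 (c.2 + b) \ (Ioo c.2 (c.2 + t) ∪ Ioo (c.2 + t) (c.2 + t + (b - t))) ⊆
      {c.2 + t} := by
    intro y ⟨⟨h₁, h₂⟩, hy⟩
    simp only [mem_union, mem_Ioo, not_or, not_and_or, not_lt] at hy
    simp only [mem_singleton_iff]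
    rcases hy with ⟨h | h, h' | h'⟩ <;> linarith
  have hnull : volume (Ioo c.1 (c.1 + w) ×ˢ
      (Ioo c.2 (c.2 + b) \ (Ioo c.2 (c.2 + t) ∪ Ioo (c.2 + t) (c.2 + t + (b - t))))) = 0 := by
    rw [Measure.volume_eq_prod, Measure.prod_prod, measure_mono_null hgap (measure_singleton _),
      mul_zero]
  refine ae_eq_set.2 ⟨?_, ?_⟩
  · simpa only [rect, ← prod_union, prod_sdiff_prod, sdiff_self, empty_prod, union_empty]
      using hnull
  · rw [sdiff_eq_empty.2 (union_subset (rect_lower_subset c htb) (rect_upper_subset c ht)),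
      measure_empty]

def IsGood (B : ℝ) (s : ℝ × ℝ) : Prop :=
  s.1 ≤ 3 * s.2 ∧ s.2 ≤ 3 * s.1 ∧ ∃ m : ℤ, s.1 * s.2 * B = 2 * π * m

namespace IsGood

variable {B : ℝ} {s : ℝ × ℝ}

lemma fst_nonneg (h : IsGood B s) : 0 ≤ s.1 := by
  linarith [h.1, h.2.1]

lemma snd_nonneg (h : IsGood B s) : 0 ≤ s.2 := by
  linarith [h.1, h.2.1]

lemma swap (h : IsGood B s) : IsGood B s.swap := by
  obtain ⟨h₁, h₂, m, hm⟩ := h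
  exact ⟨h₂, h₁, m, by rw [Prod.fst_swap, Prod.snd_swap, mul_comm s.2, hm]⟩

end IsGood

lemma isGood_zero (B : ℝ) : IsGood B 0 :=
  ⟨by simp, by simp, 0, by simp⟩

structure Box where
  corner : ℝ × ℝ
  size : ℝ × ℝ

namespace Box

def toSet (R : Box) : Set (ℝ × ℝ) :=
  rect R.corner R.size

def area (R : Box) : ℝ :=
  R.size.1 * R.size.2

def swap (R : Box) : Box :=
  ⟨R.corner.swap, R.size.swap⟩

lemma toSet_swap (R : Box) : R.swap.toSet = Prod.swap ⁻¹' R.toSet :=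
  rect_swap R.corner R.size

lemma area_swap (R : Box) : R.swap.area = R.area :=
  mul_comm _ _

end Box

structure IsQuantizedSplit (B : ℝ) (R L U : Box) : Prop where
  isGood_fst : IsGood B L.size
  isGood_snd : IsGood B U.size
  abs_area_fst_sub_le : |L.area - R.area / 2| ≤ π / B
  abs_area_snd_sub_le : |U.area - R.area / 2| ≤ π / B
  disjoint : Disjoint L.toSet U.toSet
  fst_subset : L.toSet ⊆ R.toSet
  snd_subset : U.toSet ⊆ R.toSet
  ae_eq_union : R.toSet =ᵐ[volume] (L.toSet ∪ U.toSet : Set (ℝ × ℝ))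

lemma IsQuantizedSplit.swap {B : ℝ} {R L U : Box} (h : IsQuantizedSplit B R L U) :
    IsQuantizedSplit B R.swap L.swap U.swap where
  isGood_fst := h.isGood_fst.swap
  isGood_snd := h.isGood_snd.swap
  abs_area_fst_sub_le := by simpa only [Box.area_swap] using h.abs_area_fst_sub_le
  abs_area_snd_sub_le := by simpa only [Box.area_swap] using h.abs_area_snd_sub_le
  disjoint := by simpa only [Box.toSet_swap] using h.disjoint.preimage Prod.swap
  fst_subset := by simpa only [Box.toSet_swap] using preimage_mono h.fst_subset
  snd_subset := by simpa only [Box.toSet_swap] using preimage_mono h.snd_subset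
  ae_eq_union := by
    simpa only [Box.toSet_swap, preimage_union] using
      (Measure.volume_eq_prod ℝ ℝ ▸ Measure.measurePreserving_swap).quasiMeasurePreserving
        |>.preimage_ae_eq h.ae_eq_union

noncomputable def Box.splitSnd (B : ℝ) (R : Box) : Box × Box :=
  let t := cutLength B R.size.1 R.size.2
  if t = 0 then (R, ⟨R.corner, 0⟩)
  else (⟨R.corner, (R.size.1, t)⟩, ⟨(R.corner.1, R.corner.2 + t), (R.size.1, R.size.2 - t)⟩)

noncomputable def Box.split (B : ℝ) (R : Box) : Box × Box :=
  if R.size.1 ≤ R.size.2 then Box.splitSnd B R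
  else ((Box.splitSnd B R.swap).1.swap, (Box.splitSnd B R.swap).2.swap)

lemma isQuantizedSplit_splitSnd {B : ℝ} (hB : 0 < B) {R : Box} (hR : IsGood B R.size)
    (hle : R.size.1 ≤ R.size.2) :
    IsQuantizedSplit B R (Box.splitSnd B R).1 (Box.splitSnd B R).2 := by
  obtain ⟨c, a, b⟩ := R
  have ⟨_, hb, m, hm⟩ := hR
  dsimp only at hle hb hm
  have ha : 0 ≤ a := hR.fst_nonneg
  have harea := abs_mul_cutLength_sub_le hB ha hm
  by_cases ht : cutLength B a b = 0
  · rw [ht, mul_zero, zero_sub, abs_neg] at harea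
    have hhalf : |a * b - a * b / 2| = |a * b / 2| := by ring_nf
    simp only [Box.splitSnd, ht, if_true]
    exact
      { isGood_fst := hR
        isGood_snd := isGood_zero B
        abs_area_fst_sub_le := by simpa [Box.area, hhalf] using harea
        abs_area_snd_sub_le := by simpa [Box.area] using harea
        disjoint := by simp [Box.toSet]
        fst_subset := subset_rfl
        snd_subset := by simp [Box.toSet]
        ae_eq_union := by simp only [Box.toSet, rect_zero, union_empty]; rfl }
  · have ha : 0 < a := ha.lt_of_ne fun h ↦ ht (by simp [cutLength, ← h])
    obtain ⟨ht₀, htb, hat, habt⟩ := cutLength_bounds hB ha hle hm ht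
    have hq := mul_cutLength_mul hB ha hm
    simp only [Box.splitSnd, if_neg ht]
    set t := cutLength B a b
    exact
      { isGood_fst := ⟨hat, by linarith, _, hq⟩
        isGood_snd := ⟨habt, by linarith, m - m / 2, by push_cast; linear_combination hm - hq⟩
        abs_area_fst_sub_le := harea
        abs_area_snd_sub_le := by
          show |a * (b - t) - a * b / 2| ≤ π / B
          rw [← abs_neg]; convert harea using 2; ring
        disjoint := disjoint_rect_lower_upper c a t (b - t)
        fst_subset := rect_lower_subset c htb
        snd_subset := rect_upper_subset c ht₀
        ae_eq_union := rect_ae_eq_lower_union_upper c ht₀ htb }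

lemma isQuantizedSplit_split {B : ℝ} (hB : 0 < B) {R : Box} (hR : IsGood B R.size) :
    IsQuantizedSplit B R (Box.split B R).1 (Box.split B R).2 := by
  unfold Box.split
  split_ifs with hle
  · exact isQuantizedSplit_splitSnd hB hR hle
  · exact (isQuantizedSplit_splitSnd hB (R := R.swap) hR.swap (not_le.1 hle).le).swap

noncomputable def tile (B : ℝ) (R : Box) : ℕ → ℕ → Box
  | 0, _ => R
  | k + 1, i =>
    if i % 2 = 0 then (Box.split B (tile B R k (i / 2))).1 else (Box.split B (tile B R k (i / 2))).2

lemma biUnion_range_two_mul {α : Type*} (f : ℕ → Set α) (n : ℕ) :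
    ⋃ i ∈ Finset.range (2 * n), f i = ⋃ i ∈ Finset.range n, (f (2 * i) ∪ f (2 * i + 1)) := by
  ext x
  simp only [mem_iUnion, Finset.mem_range, mem_union, exists_prop]
  constructor
  · rintro ⟨i, hi, hx⟩
    obtain ⟨j, rfl | rfl⟩ := Nat.even_or_odd' i
    exacts [⟨j, by omega, .inl hx⟩, ⟨j, by omega, .inr hx⟩]
  · rintro ⟨i, hi, hx | hx⟩
    exacts [⟨2 * i, by omega, hx⟩, ⟨2 * i + 1, by omega, hx⟩]

section tile

variable {B : ℝ} {R : Box}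

lemma tile_succ_two_mul (k i : ℕ) : tile B R (k + 1) (2 * i) = (Box.split B (tile B R k i)).1 := by
  simp [tile]

lemma tile_succ_two_mul_add_one (k i : ℕ) :
    tile B R (k + 1) (2 * i + 1) = (Box.split B (tile B R k i)).2 := by
  simp [tile, Nat.add_mod, show (2 * i + 1) / 2 = i by omega]

lemma isGood_tile (hB : 0 < B) (hR : IsGood B R.size) (k i : ℕ) : IsGood B (tile B R k i).size := by
  induction k generalizing i with
  | zero => exact hR
  | succ k ih =>
    obtain ⟨j, rfl | rfl⟩ := Nat.even_or_odd' i
    · rw [tile_succ_two_mul]; exact (isQuantizedSplit_split hB (ih j)).isGood_fst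
    · rw [tile_succ_two_mul_add_one]; exact (isQuantizedSplit_split hB (ih j)).isGood_snd

lemma isQuantizedSplit_tile (hB : 0 < B) (hR : IsGood B R.size) (k i : ℕ) :
    IsQuantizedSplit B (tile B R k i) (tile B R (k + 1) (2 * i))
      (tile B R (k + 1) (2 * i + 1)) := by
  rw [tile_succ_two_mul, tile_succ_two_mul_add_one]
  exact isQuantizedSplit_split hB (isGood_tile hB hR k i)

lemma tile_succ_subset (hB : 0 < B) (hR : IsGood B R.size) (k i : ℕ) :
    (tile B R (k + 1) i).toSet ⊆ (tile B R k (i / 2)).toSet := by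
  obtain ⟨j, rfl | rfl⟩ := Nat.even_or_odd' i
  · simpa using (isQuantizedSplit_tile hB hR k j).fst_subset
  · simpa [Nat.add_div] using (isQuantizedSplit_tile hB hR k j).snd_subset

lemma disjoint_tile (hB : 0 < B) (hR : IsGood B R.size) (k : ℕ) {i j : ℕ} (hi : i < 2 ^ k)
    (hj : j < 2 ^ k) (hij : i ≠ j) : Disjoint (tile B R k i).toSet (tile B R k j).toSet := by
  induction k generalizing i j with
  | zero => omega
  | succ k ih =>
    by_cases hpar : i / 2 = j / 2
    · have hsplit := isQuantizedSplit_tile hB hR k (i / 2)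
      obtain ⟨hi', hj'⟩ | ⟨hi', hj'⟩ :
          i = 2 * (i / 2) ∧ j = 2 * (i / 2) + 1 ∨ i = 2 * (i / 2) + 1 ∧ j = 2 * (i / 2) := by
        omega
      · rw [hi', hj']; exact hsplit.disjoint
      · rw [hi', hj']; exact hsplit.disjoint.symm
    · exact (ih (by omega) (by omega) hpar).mono (tile_succ_subset hB hR k i)
        (tile_succ_subset hB hR k j)

lemma abs_area_tile_sub_le (hB : 0 < B) (hR : IsGood B R.size) (k i : ℕ) :
    |(tile B R k i).area - R.area / 2 ^ k| ≤ 2 * π / B := by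
  induction k generalizing i with
  | zero => simp [tile, pi_pos.le, hB.le, div_nonneg]
  | succ k ih =>
    have hsplit : |(tile B R (k + 1) i).area - (tile B R k (i / 2)).area / 2| ≤ π / B := by
      obtain ⟨j, rfl | rfl⟩ := Nat.even_or_odd' i
      · simpa using (isQuantizedSplit_tile hB hR k j).abs_area_fst_sub_le
      · simpa [Nat.add_div] using (isQuantizedSplit_tile hB hR k j).abs_area_snd_sub_le
    have hparent := ih (i / 2)
    rw [abs_le] at hsplit hparent ⊢
    rw [pow_succ, ← div_div]
    have htwo : 2 * π / B = 2 * (π / B) := mul_div_assoc _ _ _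
    constructor <;> linarith

lemma biUnion_tile_ae_eq (hB : 0 < B) (hR : IsGood B R.size) (k : ℕ) :
    (⋃ i ∈ Finset.range (2 ^ k), (tile B R k i).toSet) =ᵐ[volume] R.toSet := by
  induction k with
  | zero =>
    simp only [pow_zero, Finset.range_one, Finset.mem_singleton, iUnion_iUnion_eq_left]
    rfl
  | succ k ih =>
    rw [pow_succ', biUnion_range_two_mul]
    refine Filter.EventuallyEq.trans ?_ ih
    exact Filter.EventuallyEq.countable_iUnion fun i ↦ Filter.EventuallyEq.countable_iUnion fun _ ↦
      (isQuantizedSplit_tile hB hR k i).ae_eq_union.symm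

end tile

theorem stmt7_general (a b Bs : ℝ) (hBs : 0 < Bs)
    (hab1 : a ≤ 3 * b) (hab2 : b ≤ 3 * a)
    (hflux : ∃ m : ℤ, a * b * Bs = 2 * Real.pi * m) :
    ∃ (c s : ℕ → ℕ → ℝ × ℝ),
      c 0 0 = (0, 0) ∧ s 0 0 = (a, b) ∧
      (∀ k i, i < 2 ^ k → 0 ≤ (s k i).1 ∧ 0 ≤ (s k i).2 ∧
        (s k i).1 ≤ 3 * (s k i).2 ∧ (s k i).2 ≤ 3 * (s k i).1) ∧
      (∀ k i, i < 2 ^ k → ∃ m : ℤ, (s k i).1 * (s k i).2 * Bs = 2 * Real.pi * m) ∧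
      (∀ k i j, i < 2 ^ k → j < 2 ^ k → i ≠ j →
        Disjoint (rect (c k i) (s k i)) (rect (c k j) (s k j))) ∧
      (∀ k i, i < 2 ^ k →
        volume (symmDiff (rect (c k i) (s k i))
          (rect (c (k+1) (2*i)) (s (k+1) (2*i)) ∪ rect (c (k+1) (2*i+1)) (s (k+1) (2*i+1)))) = 0) ∧
      (∀ k, volume (symmDiff (rect (0, 0) (a, b))
          (⋃ i ∈ Finset.range (2 ^ k), rect (c k i) (s k i))) = 0) ∧
      (∀ k i, i < 2 ^ k →
        |(s k i).1 * (s k i).2 - (2:ℝ) ^ (-(k:ℤ)) * (a * b)| ≤ 4 * Real.pi / Bs) := by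
  set R : Box := ⟨(0, 0), (a, b)⟩
  have hR : IsGood Bs R.size := ⟨hab1, hab2, hflux⟩
  refine ⟨fun k i ↦ (tile Bs R k i).corner, fun k i ↦ (tile Bs R k i).size, rfl, rfl,
    fun k i _ ↦ ?_, fun k i _ ↦ (isGood_tile hBs hR k i).2.2,
    fun k i j hi hj hij ↦ disjoint_tile hBs hR k hi hj hij,
    fun k i _ ↦ measure_symmDiff_eq_zero_iff.2 (isQuantizedSplit_tile hBs hR k i).ae_eq_union,
    fun k ↦ measure_symmDiff_eq_zero_iff.2 (biUnion_tile_ae_eq hBs hR k).symm, fun k i _ ↦ ?_⟩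
  · have hgood := isGood_tile hBs hR k i
    exact ⟨hgood.fst_nonneg, hgood.snd_nonneg, hgood.1, hgood.2.1⟩
  · calc |(tile Bs R k i).area - (2:ℝ) ^ (-(k:ℤ)) * R.area|
        = |(tile Bs R k i).area - R.area / 2 ^ k| := by rw [zpow_neg, zpow_natCast, inv_mul_eq_div]
      _ ≤ 2 * π / Bs := abs_area_tile_sub_le hBs hR k i
      _ ≤ 4 * π / Bs := by gcongr; norm_num

/-- Flux-quantized dyadic subdivision of a rectangle: at each generation `k` there are
`2^k` pairwise disjoint rectangles of aspect ratio at most 3 and quantized area, each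
splitting into two rectangles of the next generation, covering `R₀` up to null sets,
with areas close to `2^{-k} a b`. -/
theorem stmt7 (a b Bs : ℝ) (ha : 0 < a) (hb : 0 < b) (hBs : 0 < Bs)
    (hab1 : a ≤ 3 * b) (hab2 : b ≤ 3 * a)
    (hflux : ∃ m : ℤ, a * b * Bs = 2 * Real.pi * m) :
    ∃ (c s : ℕ → ℕ → ℝ × ℝ),
      c 0 0 = (0, 0) ∧ s 0 0 = (a, b) ∧
      (∀ k i, i < 2 ^ k → 0 ≤ (s k i).1 ∧ 0 ≤ (s k i).2 ∧
        (s k i).1 ≤ 3 * (s k i).2 ∧ (s k i).2 ≤ 3 * (s k i).1) ∧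
      (∀ k i, i < 2 ^ k → ∃ m : ℤ, (s k i).1 * (s k i).2 * Bs = 2 * Real.pi * m) ∧
      (∀ k i j, i < 2 ^ k → j < 2 ^ k → i ≠ j →
        Disjoint (rect (c k i) (s k i)) (rect (c k j) (s k j))) ∧
      (∀ k i, i < 2 ^ k →
        volume (symmDiff (rect (c k i) (s k i))
          (rect (c (k+1) (2*i)) (s (k+1) (2*i)) ∪ rect (c (k+1) (2*i+1)) (s (k+1) (2*i+1)))) = 0) ∧
      (∀ k, volume (symmDiff (rect (0, 0) (a, b))
          (⋃ i ∈ Finset.range (2 ^ k), rect (c k i) (s k i))) = 0) ∧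
      (∀ k i, i < 2 ^ k →
        |(s k i).1 * (s k i).2 - (2:ℝ) ^ (-(k:ℤ)) * (a * b)| ≤ 4 * Real.pi / Bs) :=
  stmt7_general a b Bs hBs hab1 hab2 hflux
end
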